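/- (Derivative identity for the log-sum, Eq. (der1).) Fix an integer m ≥ 1 and offsets a, b ∈ {0, 1/2}. For g > 1, let F(g) = Σ_{p=0}^{m−1} Σ_{q=0}^{m−1} log( |g − e^{2πi(p+a)/m}| + |g − e^{2πi(q+b)/m}| ). Then for every g₀ > 1, F is differentiable at g₀ with F'(g₀) = m²/(2g₀) + (1/2)·(g₀ − g₀⁻¹) · ( Σ_{p=0}^{m−1} |g₀ − e^{2πi(p+a)/m}|⁻¹ ) · ( Σ_{q=0}^{m−1} |g₀ − e^{2πi(q+b)/m}|⁻¹ ). -/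

import Mathlib

/-!
For `‖z‖ = 1` the distance `ε(g) = ‖g - z‖` satisfies `ε² = g² - 2g·Re z + 1`, hence
`2g·ε·ε' = 2g(g - Re z) = ε² + g² - 1`. For two such points the derivative of
`log (ε_z + ε_w)` is therefore `(ε_z ε_w + g² - 1) / (2g ε_z ε_w)`: the factor `ε_z + ε_w`
cancels, leaving `1/(2g) + (g - g⁻¹)/(2 ε_z ε_w)`, and summing over the `m²` pairs turns the
second term into a product of two sums.
-/

open scoped Real

/-- `ε_x = |g - e^{2πi x/m}|` for the transverse-field Ising chain of length `m`. -/
noncomputable def eps (m : ℕ) (g x : ℝ) : ℝ :=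
  ‖(g : ℂ) - Complex.exp (2 * Real.pi * Complex.I * (x : ℂ) / (m : ℂ))‖

/-- The ground state energy splitting
`δ(g, m) = (1/2) (Σ_{j<m} ε_{j+1/2} - Σ_{j<m} ε_j)` of the periodic one-dimensional
transverse-field Ising chain on `m` qubits. -/
noncomputable def tfimDelta (m : ℕ) (g : ℝ) : ℝ :=
  (1 / 2) * ((∑ j ∈ Finset.range m, eps m g ((j : ℝ) + 1 / 2))
    - ∑ j ∈ Finset.range m, eps m g (j : ℝ))

open scoped RealInnerProductSpace

theorem HasDerivAt.norm {F : Type*} [NormedAddCommGroup F] [InnerProductSpace ℝ F]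
    {f : ℝ → F} {f' : F} {x : ℝ} (hf : HasDerivAt f f' x) (h0 : f x ≠ 0) :
    HasDerivAt (‖f ·‖) (⟪f x, f'⟫ / ‖f x‖) x := by
  have hsq : ‖f x‖ ^ 2 ≠ 0 := by positivity
  convert hf.norm_sq.sqrt hsq using 1
  · simp only [Real.sqrt_sq (norm_nonneg _)]
  · rw [Real.sqrt_sq (norm_nonneg _)]
    ring

namespace Complex

theorem sq_norm_ofReal_sub {z : ℂ} (hz : ‖z‖ = 1) (g : ℝ) :
    ‖(g : ℂ) - z‖ ^ 2 = g ^ 2 - 2 * g * z.re + 1 := by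
  have hz2 : z.re * z.re + z.im * z.im = 1 := by
    rw [← normSq_apply, ← Complex.sq_norm, hz, one_pow]
  rw [Complex.sq_norm, normSq_apply]
  simp only [sub_re, ofReal_re, sub_im, ofReal_im]
  linear_combination hz2

theorem ofReal_sub_ne_zero {z : ℂ} (hz : ‖z‖ = 1) {g : ℝ} (hg : 1 < g) :
    (g : ℂ) - z ≠ 0 := by
  intro h
  have hnorm := congrArg norm (sub_eq_zero.mp h)
  rw [hz, norm_real, Real.norm_of_nonneg (by linarith)] at hnorm
  linarith

theorem hasDerivAt_norm_ofReal_sub (z : ℂ) {g : ℝ} (hg : (g : ℂ) - z ≠ 0) :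
    HasDerivAt (fun t : ℝ => ‖(t : ℂ) - z‖) ((g - z.re) / ‖(g : ℂ) - z‖) g := by
  simpa [Complex.inner] using ((hasDerivAt_id g).ofReal_comp.sub_const z).norm hg

theorem hasDerivAt_log_norm_sub_add_norm_sub {z w : ℂ} (hz : ‖z‖ = 1)
    (hw : ‖w‖ = 1) {g : ℝ} (hg : 1 < g) :
    HasDerivAt (fun t : ℝ => Real.log (‖(t : ℂ) - z‖ + ‖(t : ℂ) - w‖))
      (1 / (2 * g) + (1 / 2) * (g - g⁻¹) * ‖(g : ℂ) - z‖⁻¹ * ‖(g : ℂ) - w‖⁻¹) g := by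
  have hz0 := ofReal_sub_ne_zero hz hg
  have hw0 := ofReal_sub_ne_zero hw hg
  have hu : 0 < ‖(g : ℂ) - z‖ := norm_pos_iff.mpr hz0
  have hv : 0 < ‖(g : ℂ) - w‖ := norm_pos_iff.mpr hw0
  refine (((hasDerivAt_norm_ofReal_sub z hz0).add
    (hasDerivAt_norm_ofReal_sub w hw0)).log (add_pos hu hv).ne').congr_deriv ?_
  simp only [Pi.add_apply]
  have hg0 : g ≠ 0 := by positivity
  field_simp
  linear_combination
    -‖(g : ℂ) - w‖ * sq_norm_ofReal_sub hz g - ‖(g : ℂ) - z‖ * sq_norm_ofReal_sub hw g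

theorem norm_exp_two_pi_I_mul_div (x : ℝ) (m : ℕ) : ‖exp (2 * π * I * x / m)‖ = 1 := by
  simp [norm_exp]

end Complex

theorem log_sum_derivative_general (m : ℕ) (a b : ℝ)
    (g₀ : ℝ) (hg₀ : 1 < g₀) :
    HasDerivAt
      (fun g : ℝ => ∑ p ∈ Finset.range m, ∑ q ∈ Finset.range m,
        Real.log (eps m g ((p : ℝ) + a) + eps m g ((q : ℝ) + b)))
      ((m : ℝ) ^ 2 / (2 * g₀) + (1 / 2) * (g₀ - g₀⁻¹) *
        (∑ p ∈ Finset.range m, (eps m g₀ ((p : ℝ) + a))⁻¹) *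
        (∑ q ∈ Finset.range m, (eps m g₀ ((q : ℝ) + b))⁻¹))
      g₀ := by
  have hterm (x y : ℝ) := Complex.hasDerivAt_log_norm_sub_add_norm_sub
    (Complex.norm_exp_two_pi_I_mul_div x m) (Complex.norm_exp_two_pi_I_mul_div y m) hg₀
  refine (HasDerivAt.fun_sum fun p _ => HasDerivAt.fun_sum fun q _ =>
    hterm ((p : ℕ) + a) ((q : ℕ) + b)).congr_deriv ?_
  simp only [eps, Finset.sum_add_distrib, Finset.sum_const, Finset.card_range, nsmul_eq_mul,
    ← Finset.mul_sum, ← Finset.sum_mul]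
  ring

/-- **Derivative identity for the log-sum** (Eq. (der1)): for offsets `a, b ∈ {0, 1/2}`,
the function `F(g) = Σ_{p,q} log(ε_{p+a} + ε_{q+b})` has derivative
`F'(g₀) = m²/(2g₀) + (1/2)(g₀ - g₀⁻¹)(Σ_p ε_{p+a}⁻¹)(Σ_q ε_{q+b}⁻¹)` at every `g₀ > 1`. -/
theorem log_sum_derivative (m : ℕ) (hm : 1 ≤ m) (a b : ℝ)
    (ha : a = 0 ∨ a = 1 / 2) (hb : b = 0 ∨ b = 1 / 2)
    (g₀ : ℝ) (hg₀ : 1 < g₀) :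
    HasDerivAt
      (fun g : ℝ => ∑ p ∈ Finset.range m, ∑ q ∈ Finset.range m,
        Real.log (eps m g ((p : ℝ) + a) + eps m g ((q : ℝ) + b)))
      ((m : ℝ) ^ 2 / (2 * g₀) + (1 / 2) * (g₀ - g₀⁻¹) *
        (∑ p ∈ Finset.range m, (eps m g₀ ((p : ℝ) + a))⁻¹) *
        (∑ q ∈ Finset.range m, (eps m g₀ ((q : ℝ) + b))⁻¹))
      g₀ :=
  log_sum_derivative_general m a b g₀ hg₀
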